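/- arXiv:2106.12911 — 3 statements merged into one kernel-verified Lean document; each statement's English description precedes it below -/
import Mathlib

section
/- For any POVM {Π₀,Π₁} on ℂ²⊗ℂ² such that the partial transposes Π₀^{T_B}, Π₁^{T_B} are positive semidefinite, the average success probability (1/2)Tr[Π₀ρ₀] + (1/2)Tr[Π₁ρ₁] is at most 2/3. -/
open Matrix ComplexOrder

noncomputable def rho0 : Matrix (Fin 4) (Fin 4) ℂ :=
  (1/6 : ℂ) • !![2,0,0,0; 0,1,1,0; 0,1,1,0; 0,0,0,2]

noncomputable def rho1 : Matrix (Fin 4) (Fin 4) ℂ :=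
  (1/6 : ℂ) • !![1,0,0,0; 0,2,-1,0; 0,-1,2,0; 0,0,0,1]

/-- Combine indices for the partial transpose on the second qubit. -/
def comb (i j : Fin 4) : Fin 4 := ⟨2 * (i.val / 2) + j.val % 2, by omega⟩

/-- Partial transpose with respect to the second qubit. -/
def ptB (M : Matrix (Fin 4) (Fin 4) ℂ) : Matrix (Fin 4) (Fin 4) ℂ :=
  Matrix.of fun i j => M (comb i j) (comb j i)

/-- Dual certificate matrix `Z₀ = (1/6)(I - SWAP)`. -/
noncomputable def Zc : Matrix (Fin 4) (Fin 4) ℂ :=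
  (1/6 : ℂ) • !![0,0,0,0; 0,1,-1,0; 0,-1,1,0; 0,0,0,0]

/-- Dual certificate matrix `W₁ = (1/3)|φ⁺⟩⟨φ⁺|`. -/
noncomputable def Wc : Matrix (Fin 4) (Fin 4) ℂ :=
  (1/6 : ℂ) • !![1,0,0,1; 0,0,0,0; 0,0,0,0; 1,0,0,1]

lemma c00 : comb 0 0 = 0 := rfl
lemma c01 : comb 0 1 = 1 := rfl
lemma c02 : comb 0 2 = 0 := rfl
lemma c03 : comb 0 3 = 1 := rfl
lemma c10 : comb 1 0 = 0 := rfl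
lemma c11 : comb 1 1 = 1 := rfl
lemma c12 : comb 1 2 = 0 := rfl
lemma c13 : comb 1 3 = 1 := rfl
lemma c20 : comb 2 0 = 2 := rfl
lemma c21 : comb 2 1 = 3 := rfl
lemma c22 : comb 2 2 = 2 := rfl
lemma c23 : comb 2 3 = 3 := rfl
lemma c30 : comb 3 0 = 2 := rfl
lemma c31 : comb 3 1 = 3 := rfl
lemma c32 : comb 3 2 = 2 := rfl
lemma c33 : comb 3 3 = 3 := rfl

lemma Zc_psd : Zc.PosSemidef := by
  refine Matrix.posSemidef_iff_dotProduct_mulVec.mpr ⟨?_, ?_⟩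
  · ext i j
    fin_cases i <;> fin_cases j <;>
      norm_num [Zc, Matrix.conjTranspose_apply, Matrix.vecHead, Matrix.vecTail]
  · intro x
    have h : star x ⬝ᵥ (Zc *ᵥ x) = (1/6 : ℂ) * (star (x 1 - x 2) * (x 1 - x 2)) := by
      simp [Zc, dotProduct, Matrix.mulVec, Fin.sum_univ_four]
      ring
    rw [h]
    have h6 : (0:ℂ) ≤ 1/6 := by
      rw [Complex.le_def]; norm_num
    exact mul_nonneg h6 (star_mul_self_nonneg _)

lemma Wc_psd : Wc.PosSemidef := by
  refine Matrix.posSemidef_iff_dotProduct_mulVec.mpr ⟨?_, ?_⟩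
  · ext i j
    fin_cases i <;> fin_cases j <;>
      norm_num [Wc, Matrix.conjTranspose_apply, Matrix.vecHead, Matrix.vecTail]
  · intro x
    have h : star x ⬝ᵥ (Wc *ᵥ x) = (1/6 : ℂ) * (star (x 0 + x 3) * (x 0 + x 3)) := by
      simp [Wc, dotProduct, Matrix.mulVec, Fin.sum_univ_four]
      ring
    rw [h]
    have h6 : (0:ℂ) ≤ 1/6 := by
      rw [Complex.le_def]; norm_num
    exact mul_nonneg h6 (star_mul_self_nonneg _)

lemma trace_mul_psd_nonneg {A B : Matrix (Fin 4) (Fin 4) ℂ}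
    (hA : A.PosSemidef) (hB : B.PosSemidef) : 0 ≤ (A * B).trace := by
  obtain ⟨C, rfl⟩ : ∃ C : Matrix (Fin 4) (Fin 4) ℂ, B = Cᴴ * C := by
    open scoped MatrixOrder in exact CStarAlgebra.nonneg_iff_eq_star_mul_self.mp hB.nonneg
  rw [← Matrix.mul_assoc, Matrix.trace_mul_cycle]
  have hP : (C * A * Cᴴ).PosSemidef := hA.mul_mul_conjTranspose_same C
  rw [Matrix.trace]
  apply Finset.sum_nonneg
  intro i _
  have h2 := hP.dotProduct_mulVec_nonneg (Pi.single i 1)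
  simpa [Matrix.diag, Matrix.mulVec_single, dotProduct, Pi.single_apply, apply_ite,
    Finset.sum_ite_eq'] using h2

theorem stmt6 :
    ∀ P0 P1 : Matrix (Fin 4) (Fin 4) ℂ,
      P0.PosSemidef → P1.PosSemidef → P0 + P1 = 1 →
      (ptB P0).PosSemidef → (ptB P1).PosSemidef →
      ((1/2 : ℂ) * (P0 * rho0).trace + (1/2 : ℂ) * (P1 * rho1).trace).re ≤ 2/3 := by
  intro P0 P1 h0 h1 hsum hpt0 hpt1
  have hP1 : P1 = 1 - P0 := by rw [← hsum]; abel
  subst hP1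
  have ha := trace_mul_psd_nonneg h0 Zc_psd
  have hb := trace_mul_psd_nonneg hpt1 Wc_psd
  have hkey : (P0 * rho0).trace + ((1 - P0) * rho1).trace
      = 4/3 - (P0 * Zc).trace - ((ptB (1 - P0)) * Wc).trace := by
    simp only [rho0, rho1, Zc, Wc, ptB, Matrix.trace, Matrix.diag, Matrix.mul_apply,
      Fin.sum_univ_four, Matrix.sub_apply, Matrix.one_apply, Matrix.smul_apply,
      Matrix.of_apply, Matrix.cons_val', Matrix.cons_val_zero, Matrix.cons_val_one,
      Matrix.head_cons, Matrix.head_fin_const, Matrix.empty_val', Matrix.cons_val_fin_one,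
      Matrix.cons_val_two, Matrix.cons_val_three, Matrix.tail_cons,
      c00, c01, c02, c03, c10, c11, c12, c13, c20, c21, c22, c23, c30, c31, c32, c33]
    norm_num
    simp only [show (1:Fin 4) ≠ 2 by decide, show (2:Fin 4) ≠ 1 by decide, if_false]
    ring
  have hsum2 : (1/2 : ℂ) * (P0 * rho0).trace + (1/2 : ℂ) * ((1 - P0) * rho1).trace
      = (1/2 : ℂ) * (4/3 - (P0 * Zc).trace - ((ptB (1 - P0)) * Wc).trace) := by
    rw [← hkey]; ring
  rw [hsum2]
  have har : 0 ≤ ((P0 * Zc).trace).re := (Complex.le_def.mp ha).1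
  have hbr : 0 ≤ (((ptB (1 - P0)) * Wc).trace).re := (Complex.le_def.mp hb).1
  simp [Complex.mul_re, Complex.sub_re, Complex.div_re]
  norm_num
  linarith
end

section
/- For every n, there exists a feasible solution to the n-round dual SDP: Y = I_{4^n}/6^n together with positive semidefinite matrices Q_s (s ∈ {0,1}^n) satisfying Y − Q_s^{T_B} − ρ_s/2^n ⪰ 0 for all s, and Tr[Y] = (2/3)^n. Consequently, for any POVM {Π_s}_{s∈{0,1}^n} whose elements all have positive semidefinite partial transpose, (1/2^n)·Σ_s Tr[Π_s ρ_s] ≤ (2/3)^n. -/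
open Matrix ComplexOrder

/-- Encode a pair of qubit indices (Alice bit, Bob bit) as an index of `Fin 4`. -/
def enc (p : Fin 2 × Fin 2) : Fin 4 := ⟨2 * p.1.val + p.2.val, by omega⟩

/-- Reindex a two-qubit matrix by pairs of qubit indices. -/
noncomputable def toPair (A : Matrix (Fin 4) (Fin 4) ℂ) :
    Matrix (Fin 2 × Fin 2) (Fin 2 × Fin 2) ℂ :=
  Matrix.of fun p q => A (enc p) (enc q)

/-- Partial transpose of a single pair-matrix with respect to the second (Bob) qubit. -/
noncomputable def ptB2 (M : Matrix (Fin 2 × Fin 2) (Fin 2 × Fin 2) ℂ) :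
    Matrix (Fin 2 × Fin 2) (Fin 2 × Fin 2) ℂ :=
  Matrix.of fun p q => M (p.1, q.2) (q.1, p.2)

/-- n-fold tensor power of a pair-matrix, indexed by functions `Fin n → Fin 2 × Fin 2`. -/
noncomputable def TP (n : ℕ) (A : Matrix (Fin 2 × Fin 2) (Fin 2 × Fin 2) ℂ) :
    Matrix (Fin n → Fin 2 × Fin 2) (Fin n → Fin 2 × Fin 2) ℂ :=
  Matrix.of fun p q => ∏ i, A (p i) (q i)

/-- The tensor product ρ_s = ρ_{s₁} ⊗ ⋯ ⊗ ρ_{s_n}. -/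
noncomputable def rhoProd {n : ℕ} (s : Fin n → Bool) :
    Matrix (Fin n → Fin 2 × Fin 2) (Fin n → Fin 2 × Fin 2) ℂ :=
  Matrix.of fun p q => ∏ i, (if s i then toPair rho1 else toPair rho0) (p i) (q i)

/-- Partial transpose over all Bob qubits. -/
noncomputable def ptBn {n : ℕ}
    (M : Matrix (Fin n → Fin 2 × Fin 2) (Fin n → Fin 2 × Fin 2) ℂ) :
    Matrix (Fin n → Fin 2 × Fin 2) (Fin n → Fin 2 × Fin 2) ℂ :=
  Matrix.of fun p q => M (fun i => ((p i).1, (q i).2)) (fun i => ((q i).1, (p i).2))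

/-! ### Auxiliary machinery -/

abbrev pidx := Fin 2 × Fin 2
abbrev pmat := Matrix pidx pidx ℂ

/-- variable-factor tensor power -/
noncomputable def TPv {n : ℕ} (A : Fin n → pmat) :
    Matrix (Fin n → pidx) (Fin n → pidx) ℂ :=
  Matrix.of fun p q => ∏ i, A i (p i) (q i)

lemma TPv_mul {n : ℕ} (A B : Fin n → pmat) :
    TPv A * TPv B = TPv (fun i => A i * B i) := by
  ext p q
  simp only [TPv, Matrix.mul_apply, Matrix.of_apply]
  simp_rw [← Finset.prod_mul_distrib]
  rw [Finset.prod_univ_sum (fun _ : Fin n => (Finset.univ : Finset pidx))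
      (fun i j => A i (p i) j * B i j (q i)), Fintype.piFinset_univ]

lemma TPv_conjTranspose {n : ℕ} (A : Fin n → pmat) :
    (TPv A)ᴴ = TPv (fun i => (A i)ᴴ) := by
  ext p q
  simp only [TPv, conjTranspose_apply, Matrix.of_apply, star_prod]

lemma psd_factor {m : Type*} [Fintype m] {M : Matrix m m ℂ} (h : M.PosSemidef) :
    ∃ B : Matrix m m ℂ, M = Bᴴ * B := by
  classical
  open scoped MatrixOrder in
  obtain ⟨B, hB⟩ := CStarAlgebra.nonneg_iff_eq_star_mul_self.mp h.nonneg
  exact ⟨B, hB⟩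

lemma TPv_posSemidef {n : ℕ} (A : Fin n → pmat) (h : ∀ i, (A i).PosSemidef) :
    (TPv A).PosSemidef := by
  choose C hC using fun i => psd_factor (h i)
  have : TPv A = (TPv C)ᴴ * TPv C := by
    rw [TPv_conjTranspose, TPv_mul]
    exact congrArg TPv (funext fun i => hC i)
  rw [this]
  exact posSemidef_conjTranspose_mul_self _

lemma prod_sub_prod {n : ℕ} (a b : Fin n → ℂ) :
    (∏ i, a i) - ∏ i, b i
      = ∑ k : Fin n, ∏ i, (if i < k then b i else if i = k then a i - b i else a i) := by
  induction n with
  | zero => simp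
  | succ n ih =>
    rw [Fin.sum_univ_succ]
    have h0 : (∏ i : Fin (n+1), if i < 0 then b i else if i = 0 then a i - b i else a i)
        = (a 0 - b 0) * ∏ i : Fin n, a i.succ := by
      rw [Fin.prod_univ_succ]
      simp [Fin.succ_ne_zero]
    have hsucc : ∀ k : Fin n,
        (∏ i : Fin (n+1), if i < k.succ then b i else if i = k.succ then a i - b i else a i)
        = b 0 * ∏ i : Fin n, (if i < k then b i.succ else if i = k then a i.succ - b i.succ
            else a i.succ) := by
      intro k
      rw [Fin.prod_univ_succ]
      congr 1
      · simp [Fin.succ_pos]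
    rw [h0]
    simp only [hsucc]
    rw [← Finset.mul_sum, ← ih (fun i => a i.succ) (fun i => b i.succ),
      Fin.prod_univ_succ a, Fin.prod_univ_succ b]
    ring

lemma posSemidef_sum {m α : Type*} [Fintype m] (t : Finset α) (f : α → Matrix m m ℂ)
    (h : ∀ a ∈ t, (f a).PosSemidef) : (∑ a ∈ t, f a).PosSemidef := by
  classical
  induction t using Finset.induction_on with
  | empty => simpa using Matrix.PosSemidef.zero
  | insert _ _ hnot ih =>
    rw [Finset.sum_insert hnot]
    exact (h _ (Finset.mem_insert_self _ _)).add
      (ih fun a ha => h a (Finset.mem_insert_of_mem ha))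

lemma TPv_sub_posSemidef {n : ℕ} (A B : Fin n → pmat)
    (hB : ∀ i, (B i).PosSemidef) (hAB : ∀ i, (A i - B i).PosSemidef) :
    (TPv A - TPv B).PosSemidef := by
  have key : TPv A - TPv B
      = ∑ k : Fin n, TPv (fun i => if i < k then B i else if i = k then A i - B i else A i) := by
    ext p q
    rw [Matrix.sum_apply]
    simp only [Matrix.sub_apply, TPv, Matrix.of_apply]
    rw [prod_sub_prod (fun i => A i (p i) (q i)) (fun i => B i (p i) (q i))]
    refine Finset.sum_congr rfl fun k _ => Finset.prod_congr rfl fun i _ => ?_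
    split_ifs <;> simp [Matrix.sub_apply]
  rw [key]
  refine posSemidef_sum _ _ fun k _ => TPv_posSemidef _ fun i => ?_
  by_cases h1 : i < k
  · simpa [h1] using hB i
  · by_cases h2 : i = k
    · simpa [h1, h2] using hAB k
    · have : (A i).PosSemidef := by
        have := (hAB i).add (hB i)
        rwa [sub_add_cancel] at this
      simpa [h1, h2] using this

/-! ### scalar and trace helpers -/

lemma smul_posSemidef {m : Type*} [Fintype m] {M : Matrix m m ℂ} (hM : M.PosSemidef)
    {c : ℂ} (hc : 0 ≤ c) : (c • M).PosSemidef := by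
  constructor
  · have hstar : star c = c := by
      rw [Complex.star_def, Complex.conj_eq_iff_im]
      exact ((Complex.le_def.mp hc).2).symm
    unfold Matrix.IsHermitian
    rw [conjTranspose_smul, hM.1, hstar]
  · exact (hM.smul hc).2

lemma trace_nonneg_of_posSemidef {m : Type*} [Fintype m] {M : Matrix m m ℂ}
    (hM : M.PosSemidef) : 0 ≤ M.trace := by
  obtain ⟨B, rfl⟩ := psd_factor hM
  rw [Matrix.trace]
  refine Finset.sum_nonneg fun i _ => ?_
  rw [Matrix.diag_apply, Matrix.mul_apply]
  exact Finset.sum_nonneg fun j _ => star_mul_self_nonneg _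

lemma trace_mul_nonneg_of_posSemidef {m : Type*} [Fintype m] {M N : Matrix m m ℂ}
    (hM : M.PosSemidef) (hN : N.PosSemidef) : 0 ≤ (M * N).trace := by
  obtain ⟨B, rfl⟩ := psd_factor hM
  rw [← Matrix.trace_mul_cycle]
  exact trace_nonneg_of_posSemidef (hN.mul_mul_conjTranspose_same B)

lemma cnonneg {r : ℝ} (h : 0 ≤ r) : (0 : ℂ) ≤ (r : ℂ) := by
  rw [Complex.le_def]
  simp [h]

/-! ### concrete 4×4 matrices -/

noncomputable def Sw : pmat := Matrix.of fun p q => if p.1 = q.2 ∧ p.2 = q.1 then 1 else 0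
noncomputable def Ph : pmat := Matrix.of fun p q => if p.1 = p.2 ∧ q.1 = q.2 then (1/2 : ℂ) else 0
noncomputable def AS : pmat := (1/2 : ℂ) • (1 - Sw)
noncomputable def SS : pmat := (1/2 : ℂ) • (1 + Sw)

lemma AS_eq : AS = ASᴴ * AS := by
  ext ⟨a,b⟩ ⟨c,d⟩
  fin_cases a <;> fin_cases b <;> fin_cases c <;> fin_cases d <;>
    simp [AS, Sw, Matrix.mul_apply, Fintype.sum_prod_type, Fin.sum_univ_two,
      Matrix.one_apply, Matrix.smul_apply, Matrix.sub_apply, Matrix.conjTranspose_apply] <;>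
    norm_num [Prod.ext_iff, Fin.ext_iff, Matrix.vecHead, Matrix.vecTail, Function.comp, map_ofNat, Complex.ext_iff]

lemma SS_eq : SS = SSᴴ * SS := by
  ext ⟨a,b⟩ ⟨c,d⟩
  fin_cases a <;> fin_cases b <;> fin_cases c <;> fin_cases d <;>
    simp [SS, Sw, Matrix.mul_apply, Fintype.sum_prod_type, Fin.sum_univ_two,
      Matrix.one_apply, Matrix.smul_apply, Matrix.add_apply, Matrix.conjTranspose_apply] <;>
    norm_num [Prod.ext_iff, Fin.ext_iff, Matrix.vecHead, Matrix.vecTail, Function.comp, map_ofNat, Complex.ext_iff]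

lemma Ph_eq : Ph = Phᴴ * Ph := by
  ext ⟨a,b⟩ ⟨c,d⟩
  fin_cases a <;> fin_cases b <;> fin_cases c <;> fin_cases d <;>
    simp [Ph, Matrix.mul_apply, Fintype.sum_prod_type, Fin.sum_univ_two,
      Matrix.conjTranspose_apply] <;>
    norm_num [Prod.ext_iff, Fin.ext_iff, Matrix.vecHead, Matrix.vecTail, Function.comp, map_ofNat, Complex.ext_iff]

lemma PhC_eq : (1 - Ph) = (1 - Ph)ᴴ * (1 - Ph) := by
  ext ⟨a,b⟩ ⟨c,d⟩
  fin_cases a <;> fin_cases b <;> fin_cases c <;> fin_cases d <;>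
    simp [Ph, Matrix.mul_apply, Fintype.sum_prod_type, Fin.sum_univ_two,
      Matrix.one_apply, Matrix.sub_apply, Matrix.conjTranspose_apply] <;>
    norm_num [Prod.ext_iff, Fin.ext_iff, Matrix.vecHead, Matrix.vecTail, Function.comp, map_ofNat, Complex.ext_iff]

lemma AS_psd : AS.PosSemidef := by
  rw [AS_eq]; exact posSemidef_conjTranspose_mul_self _
lemma SS_psd : SS.PosSemidef := by
  rw [SS_eq]; exact posSemidef_conjTranspose_mul_self _
lemma Ph_psd : Ph.PosSemidef := by
  rw [Ph_eq]; exact posSemidef_conjTranspose_mul_self _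
lemma PhC_psd : (1 - Ph).PosSemidef := by
  rw [PhC_eq]; exact posSemidef_conjTranspose_mul_self _

noncomputable def d0 : pmat := (6:ℂ)⁻¹ • 1
noncomputable def r0 : pmat := (2:ℂ)⁻¹ • toPair rho0
noncomputable def d1 : pmat := (2:ℂ)⁻¹ • toPair rho1
noncomputable def e1 : pmat := ptB2 d1

lemma E1 : r0 = (1/6:ℂ) • SS := by
  unfold r0
  ext ⟨a,b⟩ ⟨c,d⟩
  fin_cases a <;> fin_cases b <;> fin_cases c <;> fin_cases d <;>
    simp [SS, Sw, toPair, rho0, enc, Matrix.one_apply, Matrix.smul_apply, Matrix.add_apply] <;>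
    norm_num [Prod.ext_iff, Fin.ext_iff, Matrix.vecHead, Matrix.vecTail, Function.comp, map_ofNat, Complex.ext_iff]

lemma E2 : d1 = (1/12:ℂ) • 1 + (1/6:ℂ) • AS := by
  unfold d1
  ext ⟨a,b⟩ ⟨c,d⟩
  fin_cases a <;> fin_cases b <;> fin_cases c <;> fin_cases d <;>
    simp [AS, Sw, toPair, rho1, enc, Matrix.one_apply, Matrix.smul_apply, Matrix.add_apply,
      Matrix.sub_apply] <;>
    norm_num [Prod.ext_iff, Fin.ext_iff, Matrix.vecHead, Matrix.vecTail, Function.comp, map_ofNat, Complex.ext_iff]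

lemma E3 : e1 = (1/6:ℂ) • (1 - Ph) := by
  unfold e1 d1
  ext ⟨a,b⟩ ⟨c,d⟩
  fin_cases a <;> fin_cases b <;> fin_cases c <;> fin_cases d <;>
    simp [Ph, ptB2, toPair, rho1, enc, Matrix.one_apply, Matrix.smul_apply,
      Matrix.sub_apply] <;>
    norm_num [Prod.ext_iff, Fin.ext_iff, Matrix.vecHead, Matrix.vecTail, Function.comp, map_ofNat, Complex.ext_iff]

lemma E4 : d0 - e1 = (1/6:ℂ) • Ph := by
  rw [E3]
  unfold d0
  rw [smul_sub]
  norm_num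

lemma E5 : d0 - r0 = (1/6:ℂ) • AS := by
  rw [E1]
  unfold d0 AS SS
  rw [smul_smul, smul_smul, smul_sub, smul_add]
  norm_num
  module

lemma sixth_nonneg : (0:ℂ) ≤ (1/6 : ℂ) := by
  have := cnonneg (r := 1/6) (by norm_num)
  simpa using this

lemma d0_psd : d0.PosSemidef := by
  unfold d0
  refine smul_posSemidef Matrix.PosSemidef.one ?_
  have := cnonneg (r := 6⁻¹) (by norm_num)
  simpa using this

lemma r0_psd : r0.PosSemidef := by
  rw [E1]; exact smul_posSemidef SS_psd sixth_nonneg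

lemma d1_psd : d1.PosSemidef := by
  rw [E2]
  refine (smul_posSemidef Matrix.PosSemidef.one ?_).add (smul_posSemidef AS_psd sixth_nonneg)
  have := cnonneg (r := 1/12) (by norm_num)
  simpa using this

lemma e1_psd : e1.PosSemidef := by
  rw [E3]; exact smul_posSemidef PhC_psd sixth_nonneg

lemma d0_sub_e1_psd : (d0 - e1).PosSemidef := by
  rw [E4]; exact smul_posSemidef Ph_psd sixth_nonneg

lemma d0_sub_r0_psd : (d0 - r0).PosSemidef := by
  rw [E5]; exact smul_posSemidef AS_psd sixth_nonneg

/-! ### gluing lemmas -/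

lemma one_eq_TPv (n : ℕ) :
    (1 : Matrix (Fin n → pidx) (Fin n → pidx) ℂ) = TPv (fun _ => 1) := by
  ext p q
  simp only [TPv, Matrix.of_apply, Matrix.one_apply]
  by_cases h : p = q
  · subst h; simp
  · rw [if_neg h]
    obtain ⟨i, hi⟩ : ∃ i, p i ≠ q i := by
      by_contra hc
      push_neg at hc
      exact h (funext hc)
    exact (Finset.prod_eq_zero (Finset.mem_univ i) (by simp [hi])).symm

lemma smul_TPv {n : ℕ} (c : ℂ) (F : Fin n → pmat) :
    (c ^ n) • TPv F = TPv (fun i => c • F i) := by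
  ext p q
  simp only [TPv, Matrix.of_apply, Matrix.smul_apply, smul_eq_mul]
  rw [Finset.prod_mul_distrib]
  simp [Finset.prod_const]

lemma Y_eq_TPv (n : ℕ) :
    ((6:ℂ)^n)⁻¹ • (1 : Matrix (Fin n → pidx) (Fin n → pidx) ℂ) = TPv (fun _ => d0) := by
  rw [one_eq_TPv n, ← inv_pow, smul_TPv]
  rfl

lemma ptBn_TPv {n : ℕ} (A : Fin n → pmat) :
    ptBn (TPv A) = TPv (fun i => ptB2 (A i)) := rfl

lemma ptBn_sub {n : ℕ} (M N : Matrix (Fin n → pidx) (Fin n → pidx) ℂ) :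
    ptBn (M - N) = ptBn M - ptBn N := rfl

lemma ptB2_ptB2 (M : pmat) : ptB2 (ptB2 M) = M := rfl

lemma ptB2_d0 : ptB2 d0 = d0 := by
  unfold d0 ptB2
  ext ⟨a,b⟩ ⟨c,d⟩
  fin_cases a <;> fin_cases b <;> fin_cases c <;> fin_cases d <;>
    simp [Matrix.one_apply, Prod.ext_iff]

lemma trace_Y (n : ℕ) :
    (((6:ℂ)^n)⁻¹ • (1 : Matrix (Fin n → pidx) (Fin n → pidx) ℂ)).trace = ((2:ℂ)/3)^n := by
  rw [trace_smul, trace_one, smul_eq_mul]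
  have hcard : (Fintype.card (Fin n → pidx) : ℂ) = (4:ℂ)^n := by
    rw [Fintype.card_fun]
    push_cast
    norm_num
  rw [hcard, inv_mul_eq_div, ← div_pow]
  norm_num

def swapE (n : ℕ) : ((Fin n → pidx) × (Fin n → pidx)) ≃ ((Fin n → pidx) × (Fin n → pidx)) where
  toFun z := (fun i => ((z.1 i).1, (z.2 i).2), fun i => ((z.2 i).1, (z.1 i).2))
  invFun z := (fun i => ((z.1 i).1, (z.2 i).2), fun i => ((z.2 i).1, (z.1 i).2))
  left_inv z := rfl
  right_inv z := rfl

lemma trace_mul_ptBn {n : ℕ} (M N : Matrix (Fin n → pidx) (Fin n → pidx) ℂ) :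
    (M * ptBn N).trace = (ptBn M * N).trace := by
  have tr : ∀ (A B : Matrix (Fin n → pidx) (Fin n → pidx) ℂ),
      (A * B).trace = ∑ z : (Fin n → pidx) × (Fin n → pidx), A z.1 z.2 * B z.2 z.1 := by
    intro A B
    rw [Matrix.trace]
    simp only [Matrix.diag_apply, Matrix.mul_apply]
    rw [Fintype.sum_prod_type]
  rw [tr, tr]
  exact Fintype.sum_equiv (swapE n) _ _ fun z => rfl

/-! ### the dual construction -/

noncomputable def Efac {n : ℕ} (s : Fin n → Bool) (i : Fin n) : pmat := if s i then e1 else d0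
noncomputable def Dfac {n : ℕ} (s : Fin n → Bool) (i : Fin n) : pmat := if s i then d1 else d0
noncomputable def Rfac {n : ℕ} (s : Fin n → Bool) (i : Fin n) : pmat := if s i then d1 else r0

noncomputable def myQ {n : ℕ} (s : Fin n → Bool) :
    Matrix (Fin n → pidx) (Fin n → pidx) ℂ :=
  TPv (fun _ : Fin n => d0) - TPv (Efac s)

lemma myQ_psd {n : ℕ} (s : Fin n → Bool) : (myQ s).PosSemidef := by
  refine TPv_sub_posSemidef _ _ (fun i => ?_) (fun i => ?_)
  · unfold Efac; split_ifs; exacts [e1_psd, d0_psd]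
  · unfold Efac; split_ifs with h
    · exact d0_sub_e1_psd
    · rw [sub_self]; exact Matrix.PosSemidef.zero

lemma rscaled {n : ℕ} (s : Fin n → Bool) : ((2:ℂ)^n)⁻¹ • rhoProd s = TPv (Rfac s) := by
  rw [show rhoProd s = TPv (fun i => if s i then toPair rho1 else toPair rho0) from rfl,
    ← inv_pow, smul_TPv]
  refine congrArg TPv (funext fun i => ?_)
  unfold Rfac d1 r0
  split_ifs <;> rfl

lemma ptBn_myQ {n : ℕ} (s : Fin n → Bool) :
    ptBn (myQ s) = TPv (fun _ => d0) - TPv (Dfac s) := by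
  unfold myQ
  rw [ptBn_sub, ptBn_TPv, ptBn_TPv]
  congr 1
  · exact congrArg TPv (funext fun _ => ptB2_d0)
  · refine congrArg TPv (funext fun i => ?_)
    unfold Efac Dfac
    split_ifs
    · exact ptB2_ptB2 d1
    · exact ptB2_d0

lemma cond2 {n : ℕ} (s : Fin n → Bool) :
    (((6:ℂ)^n)⁻¹ • (1 : Matrix (Fin n → pidx) (Fin n → pidx) ℂ)
      - ptBn (myQ s) - ((2:ℂ)^n)⁻¹ • rhoProd s).PosSemidef := by
  have heq : ((6:ℂ)^n)⁻¹ • (1 : Matrix (Fin n → pidx) (Fin n → pidx) ℂ)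
      - ptBn (myQ s) - ((2:ℂ)^n)⁻¹ • rhoProd s = TPv (Dfac s) - TPv (Rfac s) := by
    rw [Y_eq_TPv, ptBn_myQ, rscaled]
    abel
  rw [heq]
  refine TPv_sub_posSemidef _ _ (fun i => ?_) (fun i => ?_)
  · unfold Rfac; split_ifs; exacts [d1_psd, r0_psd]
  · unfold Dfac Rfac; split_ifs with h
    · rw [sub_self]; exact Matrix.PosSemidef.zero
    · exact d0_sub_r0_psd

theorem stmt13 (n : ℕ) :
    (∃ Q : (Fin n → Bool) → Matrix (Fin n → Fin 2 × Fin 2) (Fin n → Fin 2 × Fin 2) ℂ,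
      ∀ s, (Q s).PosSemidef ∧
        (((6:ℂ)^n)⁻¹ • (1 : Matrix (Fin n → Fin 2 × Fin 2) (Fin n → Fin 2 × Fin 2) ℂ)
          - ptBn (Q s) - ((2:ℂ)^n)⁻¹ • rhoProd s).PosSemidef) ∧
    (((6:ℂ)^n)⁻¹ • (1 : Matrix (Fin n → Fin 2 × Fin 2) (Fin n → Fin 2 × Fin 2) ℂ)).trace
      = ((2:ℂ)/3)^n ∧
    ∀ P : (Fin n → Bool) → Matrix (Fin n → Fin 2 × Fin 2) (Fin n → Fin 2 × Fin 2) ℂ,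
      (∀ s, (P s).PosSemidef) → (∀ s, (ptBn (P s)).PosSemidef) →
      (∑ s, P s) = 1 →
      (((2:ℂ)^n)⁻¹ * ∑ s, (P s * rhoProd s).trace).re ≤ (2/3 : ℝ)^n := by
  classical
  set Y : Matrix (Fin n → pidx) (Fin n → pidx) ℂ := ((6:ℂ)^n)⁻¹ • 1 with hY
  refine ⟨⟨myQ, fun s => ⟨myQ_psd s, cond2 s⟩⟩, trace_Y n, ?_⟩
  intro P hP hPt hsum
  have key : ∀ s, ((2:ℂ)^n)⁻¹ * (P s * rhoProd s).trace ≤ (P s * Y).trace := by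
    intro s
    have h1 := trace_mul_nonneg_of_posSemidef (hP s) (cond2 s)
    have h2 : 0 ≤ (P s * ptBn (myQ s)).trace := by
      rw [trace_mul_ptBn]
      exact trace_mul_nonneg_of_posSemidef (hPt s) (myQ_psd s)
    have expand : (P s * (Y - ptBn (myQ s) - ((2:ℂ)^n)⁻¹ • rhoProd s)).trace
        = (P s * Y).trace - (P s * ptBn (myQ s)).trace
          - ((2:ℂ)^n)⁻¹ * (P s * rhoProd s).trace := by
      simp only [Matrix.mul_sub, Matrix.mul_smul, trace_sub, trace_smul, smul_eq_mul]
    rw [expand] at h1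
    have h3 := sub_nonneg.mp h1
    exact h3.trans (sub_le_self _ h2)
  have sum_le : ((2:ℂ)^n)⁻¹ * ∑ s, (P s * rhoProd s).trace ≤ ((2:ℂ)/3)^n := by
    rw [Finset.mul_sum]
    calc ∑ s, ((2:ℂ)^n)⁻¹ * (P s * rhoProd s).trace
        ≤ ∑ s, (P s * Y).trace := Finset.sum_le_sum fun s _ => key s
      _ = ((∑ s, P s) * Y).trace := by rw [← Matrix.trace_sum, ← Finset.sum_mul]
      _ = Y.trace := by rw [hsum, one_mul]
      _ = ((2:ℂ)/3)^n := trace_Y n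
  have hre := (Complex.le_def.mp sum_le).1
  have h23 : (((2:ℂ)/3)^n).re = (2/3:ℝ)^n := by
    have : ((2:ℂ)/3)^n = (((2/3:ℝ)^n : ℝ) : ℂ) := by push_cast; norm_num
    rw [this, Complex.ofReal_re]
  rw [h23] at hre
  exact hre
end

section
/- For the two-copy symmetric/antisymmetric protocol with inputs ρ₀⊗ρ₀ or ρ₁⊗ρ₁: the matrices Y = (1/18)(9·ρ₀⊗ρ₀ + 8·ρ₁⊗ρ₁), Q₀ = 0, Q₁ = (1/18)((3ρ₀^{T_B})⊗(3ρ₀^{T_B}) − ρ₁^{T_B}⊗ρ₁^{T_B}) form a feasible dual solution: Q₁ ⪰ 0 (its eigenvalues are 0, 1/18, or 1/9), Y − Q₀^{T_B} − (ρ₀⊗ρ₀)/2 = (4/9)(ρ₁⊗ρ₁) ⪰ 0, Y − Q₁^{T_B} − (ρ₁⊗ρ₁)/2 = 0, and Tr[Y] = 17/18. Hence every POVM {Π₀,Π₁} on (ℂ²⊗ℂ²)⊗(ℂ²⊗ℂ²) with positive semidefinite partial transposes (across the A:B cut) satisfies (1/2)Tr[Π₀(ρ₀⊗ρ₀) + Π₁(ρ₁⊗ρ₁)]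 ≤ 17/18. -/
open Matrix ComplexOrder

open Kronecker

noncomputable def rhoAnti : Matrix (Fin 4) (Fin 4) ℂ :=
  (1/2 : ℂ) • !![0,0,0,0; 0,1,-1,0; 0,-1,1,0; 0,0,0,0]

/-- Partial transpose over both Bob qubits (the second qubit of each pair). -/
noncomputable def ptBk (M : Matrix (Fin 4 × Fin 4) (Fin 4 × Fin 4) ℂ) :
    Matrix (Fin 4 × Fin 4) (Fin 4 × Fin 4) ℂ :=
  Matrix.of fun p q => M (comb p.1 q.1, comb p.2 q.2) (comb q.1 p.1, comb q.2 p.2)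

noncomputable def Y2 : Matrix (Fin 4 × Fin 4) (Fin 4 × Fin 4) ℂ :=
  (1/18 : ℂ) • ((9:ℂ) • (rho0 ⊗ₖ rho0) + (8:ℂ) • (rhoAnti ⊗ₖ rhoAnti))

noncomputable def Q12 : Matrix (Fin 4 × Fin 4) (Fin 4 × Fin 4) ℂ :=
  (1/18 : ℂ) • ((((3:ℂ) • ptB rho0) ⊗ₖ ((3:ℂ) • ptB rho0)) - (ptB rhoAnti ⊗ₖ ptB rhoAnti))

/-! ### Auxiliary material -/

/-- The (unnormalized-basis) projector onto the Bell state `Φ⁺`. -/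
noncomputable def Pm : Matrix (Fin 4) (Fin 4) ℂ :=
  (1/2 : ℂ) • !![1,0,0,1; 0,0,0,0; 0,0,0,0; 1,0,0,1]

lemma combv : (comb 0 0 = 0 ∧ comb 0 1 = 1 ∧ comb 0 2 = 0 ∧ comb 0 3 = 1) ∧
    (comb 1 0 = 0 ∧ comb 1 1 = 1 ∧ comb 1 2 = 0 ∧ comb 1 3 = 1) ∧
    (comb 2 0 = 2 ∧ comb 2 1 = 3 ∧ comb 2 2 = 2 ∧ comb 2 3 = 3) ∧
    (comb 3 0 = 2 ∧ comb 3 1 = 3 ∧ comb 3 2 = 2 ∧ comb 3 3 = 3) := by decide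

lemma hA3 : (3:ℂ) • ptB rho0 = (1/2:ℂ) • 1 + Pm := by
  ext i j
  fin_cases i <;> fin_cases j <;>
    simp [ptB, rho0, Pm, combv.1.1, combv.1.2.1, combv.1.2.2.1, combv.1.2.2.2,
      combv.2.1.1, combv.2.1.2.1, combv.2.1.2.2.1, combv.2.1.2.2.2,
      combv.2.2.1.1, combv.2.2.1.2.1, combv.2.2.1.2.2.1, combv.2.2.1.2.2.2,
      combv.2.2.2.1, combv.2.2.2.2.1, combv.2.2.2.2.2.1, combv.2.2.2.2.2.2,
      Matrix.one_apply, Matrix.vecHead, Matrix.vecTail] <;> norm_num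

lemma hBm : ptB rhoAnti = (1/2:ℂ) • 1 - Pm := by
  ext i j
  fin_cases i <;> fin_cases j <;>
    simp [ptB, rhoAnti, Pm, combv.1.1, combv.1.2.1, combv.1.2.2.1, combv.1.2.2.2,
      combv.2.1.1, combv.2.1.2.1, combv.2.1.2.2.1, combv.2.1.2.2.2,
      combv.2.2.1.1, combv.2.2.1.2.1, combv.2.2.1.2.2.1, combv.2.2.1.2.2.2,
      combv.2.2.2.1, combv.2.2.2.2.1, combv.2.2.2.2.2.1, combv.2.2.2.2.2.2,
      Matrix.one_apply, Matrix.vecHead, Matrix.vecTail]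

lemma Pm_mul_Pm : Pm * Pm = Pm := by
  ext i j
  fin_cases i <;> fin_cases j <;>
    simp [Pm, Matrix.mul_apply, Fin.sum_univ_four, Matrix.vecHead, Matrix.vecTail] <;>
    norm_num

lemma Pm_herm : Pm.IsHermitian := by
  unfold Matrix.IsHermitian
  ext i j
  fin_cases i <;> fin_cases j <;>
    simp [Pm, Matrix.conjTranspose_apply, Matrix.vecHead, Matrix.vecTail]

lemma anti_mul_anti : rhoAnti * rhoAnti = rhoAnti := by
  ext i j
  fin_cases i <;> fin_cases j <;>
    simp [rhoAnti, Matrix.mul_apply, Fin.sum_univ_four, Matrix.vecHead, Matrix.vecTail] <;>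
    norm_num

lemma anti_herm : rhoAnti.IsHermitian := by
  unfold Matrix.IsHermitian
  ext i j
  fin_cases i <;> fin_cases j <;>
    simp [rhoAnti, Matrix.conjTranspose_apply, Matrix.vecHead, Matrix.vecTail]

lemma psd_of_idem_herm {n : Type*} [Fintype n] {M : Matrix n n ℂ}
    (h1 : M.IsHermitian) (h2 : M * M = M) : M.PosSemidef := by
  have : M = Mᴴ * M := by rw [h1.eq, h2]
  rw [this]
  exact Matrix.posSemidef_conjTranspose_mul_self M

lemma kron_conjTranspose {n m : Type*} (A : Matrix n n ℂ) (B : Matrix m m ℂ) :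
    (A ⊗ₖ B)ᴴ = Aᴴ ⊗ₖ Bᴴ := by
  ext p q
  simp [Matrix.conjTranspose_apply, Matrix.kroneckerMap_apply, mul_comm]

lemma psd_smul {n : Type*} [Fintype n] {c : ℂ} (hc : 0 ≤ c) {M : Matrix n n ℂ}
    (hM : M.PosSemidef) : (c • M).PosSemidef := by
  obtain ⟨hre, him⟩ := (Complex.le_def.mp hc)
  have him0 : c.im = 0 := by simpa using him.symm
  have hcs : star c = c := Complex.ext (by simp) (by simp [him0])
  refine Matrix.PosSemidef.of_dotProduct_mulVec_nonneg ?_ ?_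
  · unfold Matrix.IsHermitian
    rw [Matrix.conjTranspose_smul, hM.1.eq, hcs]
  · intro x
    rw [Matrix.smul_mulVec, dotProduct_smul, smul_eq_mul]
    exact mul_nonneg hc (hM.dotProduct_mulVec_nonneg x)

lemma psd_trace_nonneg {n : Type*} [Fintype n] [DecidableEq n] {M : Matrix n n ℂ}
    (hM : M.PosSemidef) : 0 ≤ M.trace := by
  apply Finset.sum_nonneg
  intro i _
  have h := hM.dotProduct_mulVec_nonneg (Pi.single i 1)
  simpa [Matrix.mulVec_single, dotProduct, Pi.single_apply, mul_ite, ite_mul,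
    Finset.sum_ite_eq] using h

open scoped MatrixOrder in
lemma psd_trace_mul_nonneg {n : Type*} [Fintype n] [DecidableEq n]
    {A B : Matrix n n ℂ} (hA : A.PosSemidef) (hB : B.PosSemidef) :
    0 ≤ (A * B).trace := by
  obtain ⟨C, rfl⟩ := CStarAlgebra.nonneg_iff_eq_star_mul_self.mp hB.nonneg
  rw [star_eq_conjTranspose, ← Matrix.mul_assoc, Matrix.trace_mul_comm]
  have : C * (A * Cᴴ) = (Cᴴ)ᴴ * A * Cᴴ := by
    rw [Matrix.conjTranspose_conjTranspose, Matrix.mul_assoc]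
  rw [this]
  exact psd_trace_nonneg (hA.conjTranspose_mul_mul_same _)

lemma sub_kron {n m : Type*} (A B : Matrix n n ℂ) (C : Matrix m m ℂ) :
    (A - B) ⊗ₖ C = A ⊗ₖ C - B ⊗ₖ C := by
  ext p q; simp [Matrix.kroneckerMap_apply, sub_mul]

lemma kron_sub {n m : Type*} (A : Matrix n n ℂ) (B C : Matrix m m ℂ) :
    A ⊗ₖ (B - C) = A ⊗ₖ B - A ⊗ₖ C := by
  ext p q; simp [Matrix.kroneckerMap_apply, mul_sub]

lemma nonneg18 : (0:ℂ) ≤ 1/18 := by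
  rw [show (1/18:ℂ) = ((1/18:ℝ):ℂ) by norm_num]
  exact_mod_cast Complex.zero_le_real.mpr (by norm_num)

lemma nonneg49 : (0:ℂ) ≤ 4/9 := by
  rw [show (4/9:ℂ) = ((4/9:ℝ):ℂ) by norm_num]
  exact_mod_cast Complex.zero_le_real.mpr (by norm_num)

lemma Q12_eq : Q12 = (1/18 : ℂ) • ((1 : Matrix (Fin 4) (Fin 4) ℂ) ⊗ₖ Pm + Pm ⊗ₖ (1 : Matrix (Fin 4) (Fin 4) ℂ)) := by
  rw [Q12, hA3, hBm]
  congr 1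
  simp only [Matrix.add_kronecker, Matrix.kronecker_add, sub_kron, kron_sub,
    Matrix.smul_kronecker, Matrix.kronecker_smul]
  module

lemma ptBk_kron (X Y : Matrix (Fin 4) (Fin 4) ℂ) :
    ptBk (X ⊗ₖ Y) = ptB X ⊗ₖ ptB Y := by
  ext p q
  simp [ptBk, ptB, Matrix.kroneckerMap_apply]

lemma ptB_ptB (M : Matrix (Fin 4) (Fin 4) ℂ) : ptB (ptB M) = M := by
  have h1 : ∀ i j : Fin 4, comb (comb i j) (comb j i) = i := by decide
  ext i j
  simp [ptB, h1]

lemma ptBk_smul (c : ℂ) (M : Matrix (Fin 4 × Fin 4) (Fin 4 × Fin 4) ℂ) :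
    ptBk (c • M) = c • ptBk M := by
  ext p q; simp [ptBk]

lemma ptBk_sub (M N : Matrix (Fin 4 × Fin 4) (Fin 4 × Fin 4) ℂ) :
    ptBk (M - N) = ptBk M - ptBk N := by
  ext p q; simp [ptBk]

lemma ptBk_zero : ptBk 0 = 0 := by
  ext p q; simp [ptBk]

lemma ptBk_Q12 : ptBk Q12 =
    (1/18 : ℂ) • ((9:ℂ) • (rho0 ⊗ₖ rho0) - rhoAnti ⊗ₖ rhoAnti) := by
  have h3 : ptB ((3:ℂ) • ptB rho0) = (3:ℂ) • rho0 := by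
    have h : ((3:ℂ) • ptB rho0) = ptB ((3:ℂ) • rho0) := by ext i j; simp [ptB]
    rw [h, ptB_ptB]
  rw [Q12, ptBk_smul, ptBk_sub, ptBk_kron, ptBk_kron, h3, ptB_ptB,
    Matrix.smul_kronecker, Matrix.kronecker_smul, smul_smul]
  norm_num

lemma trace_rho0 : rho0.trace = 1 := by
  simp [rho0, Matrix.trace, Fin.sum_univ_four, Matrix.vecHead, Matrix.vecTail]
  norm_num

lemma trace_anti : rhoAnti.trace = 1 := by
  simp [rhoAnti, Matrix.trace, Fin.sum_univ_four, Matrix.vecHead, Matrix.vecTail]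
  norm_num

lemma trace_Y2 : Y2.trace = 17/18 := by
  rw [Y2]
  rw [Matrix.trace_smul, Matrix.trace_add, Matrix.trace_smul, Matrix.trace_smul,
    Matrix.trace_kronecker, Matrix.trace_kronecker, trace_rho0, trace_anti]
  norm_num

lemma comb_comb : ∀ i j : Fin 4, comb (comb i j) (comb j i) = i := by decide

/-- Partial transpose moves across a trace of a product. -/
lemma trace_ptBk_mul (M N : Matrix (Fin 4 × Fin 4) (Fin 4 × Fin 4) ℂ) :
    (ptBk M * N).trace = (M * ptBk N).trace := by
  classical
  have expand : ∀ A B : Matrix (Fin 4 × Fin 4) (Fin 4 × Fin 4) ℂ,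
      (A * B).trace = ∑ x : (Fin 4 × Fin 4) × (Fin 4 × Fin 4), A x.1 x.2 * B x.2 x.1 := by
    intro A B
    rw [Fintype.sum_prod_type]
    simp [Matrix.trace, Matrix.diag, Matrix.mul_apply]
  rw [expand, expand]
  apply Fintype.sum_equiv
    (Equiv.mk
      (fun x => ((comb x.1.1 x.2.1, comb x.1.2 x.2.2), (comb x.2.1 x.1.1, comb x.2.2 x.1.2)))
      (fun x => ((comb x.1.1 x.2.1, comb x.1.2 x.2.2), (comb x.2.1 x.1.1, comb x.2.2 x.1.2)))
      (fun x => by simp [comb_comb])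
      (fun x => by simp [comb_comb]))
  intro x
  simp only [Equiv.coe_fn_mk, ptBk, Matrix.of_apply, comb_comb]

/-- Q12 is positive semidefinite. -/
lemma Q12_psd : Q12.PosSemidef := by
  rw [Q12_eq]
  apply psd_smul nonneg18
  have hP : Pm.PosSemidef := psd_of_idem_herm Pm_herm Pm_mul_Pm
  have h1 : ((1 : Matrix (Fin 4) (Fin 4) ℂ) ⊗ₖ Pm).PosSemidef := by
    apply psd_of_idem_herm
    · unfold Matrix.IsHermitian
      rw [kron_conjTranspose, Matrix.conjTranspose_one, Pm_herm.eq]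
    · rw [← Matrix.mul_kronecker_mul, one_mul, Pm_mul_Pm]
  have h2 : (Pm ⊗ₖ (1 : Matrix (Fin 4) (Fin 4) ℂ)).PosSemidef := by
    apply psd_of_idem_herm
    · unfold Matrix.IsHermitian
      rw [kron_conjTranspose, Matrix.conjTranspose_one, Pm_herm.eq]
    · rw [← Matrix.mul_kronecker_mul, one_mul, Pm_mul_Pm]
  exact h1.add h2

lemma slack0 : Y2 - ptBk 0 - (1/2 : ℂ) • (rho0 ⊗ₖ rho0) = (4/9 : ℂ) • (rhoAnti ⊗ₖ rhoAnti) := by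
  rw [ptBk_zero, Y2]
  module

lemma anti_kron_psd : (rhoAnti ⊗ₖ rhoAnti).PosSemidef := by
  apply psd_of_idem_herm
  · unfold Matrix.IsHermitian
    rw [kron_conjTranspose, anti_herm.eq]
  · rw [← Matrix.mul_kronecker_mul, anti_mul_anti]

lemma slack1 : Y2 - ptBk Q12 - (1/2 : ℂ) • (rhoAnti ⊗ₖ rhoAnti) = 0 := by
  rw [ptBk_Q12, Y2]
  module

theorem stmt18 :
    Q12.PosSemidef ∧
    Y2 - ptBk 0 - (1/2 : ℂ) • (rho0 ⊗ₖ rho0) = (4/9 : ℂ) • (rhoAnti ⊗ₖ rhoAnti) ∧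
    (Y2 - ptBk 0 - (1/2 : ℂ) • (rho0 ⊗ₖ rho0)).PosSemidef ∧
    Y2 - ptBk Q12 - (1/2 : ℂ) • (rhoAnti ⊗ₖ rhoAnti) = 0 ∧
    Y2.trace = 17/18 ∧
    ∀ P0 P1 : Matrix (Fin 4 × Fin 4) (Fin 4 × Fin 4) ℂ,
      P0.PosSemidef → P1.PosSemidef → P0 + P1 = 1 →
      (ptBk P0).PosSemidef → (ptBk P1).PosSemidef →
      ((1/2 : ℂ) * ((P0 * (rho0 ⊗ₖ rho0) + P1 * (rhoAnti ⊗ₖ rhoAnti)).trace)).re ≤ 17/18 := by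
  refine ⟨Q12_psd, slack0, ?_, slack1, trace_Y2, ?_⟩
  · rw [slack0]
    exact psd_smul nonneg49 anti_kron_psd
  · intro P0 P1 hP0 hP1 hsum hpt0 hpt1
    set R0 := rho0 ⊗ₖ rho0 with hR0
    set R1 := rhoAnti ⊗ₖ rhoAnti with hR1
    have hY0 : (1/2 : ℂ) • R0 = Y2 - (4/9 : ℂ) • R1 := by
      have h := slack0
      rw [ptBk_zero, sub_zero] at h
      rw [← h]; abel
    have hY1 : (1/2 : ℂ) • R1 = Y2 - ptBk Q12 := by
      have h := slack1
      have h2 : Y2 - ptBk Q12 - (1/2 : ℂ) • R1 = 0 := h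
      rw [sub_eq_zero] at h2
      exact h2.symm
    have hPsum : (P0 * Y2).trace + (P1 * Y2).trace = Y2.trace := by
      rw [← Matrix.trace_add, ← Matrix.add_mul, hsum, one_mul]
    have key : (1/2 : ℂ) * ((P0 * R0 + P1 * R1).trace)
        = Y2.trace - (P0 * ((4/9:ℂ) • R1)).trace - (ptBk P1 * Q12).trace := by
      have e0 : (1/2 : ℂ) * (P0 * R0).trace = (P0 * ((1/2:ℂ) • R0)).trace := by
        rw [Matrix.mul_smul, Matrix.trace_smul]; simp
      have e1 : (1/2 : ℂ) * (P1 * R1).trace = (P1 * ((1/2:ℂ) • R1)).trace := by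
        rw [Matrix.mul_smul, Matrix.trace_smul]; simp
      rw [Matrix.trace_add, mul_add, e0, e1, hY0, hY1,
        Matrix.mul_sub, Matrix.mul_sub, Matrix.trace_sub, Matrix.trace_sub,
        trace_ptBk_mul P1 Q12, ← hPsum]
      ring
    rw [key, trace_Y2]
    have t0 : 0 ≤ (P0 * ((4/9:ℂ) • R1)).trace :=
      psd_trace_mul_nonneg hP0 (psd_smul nonneg49 anti_kron_psd)
    have t1 : 0 ≤ (ptBk P1 * Q12).trace :=
      psd_trace_mul_nonneg hpt1 Q12_psd
    have hre0 := (Complex.le_def.mp t0).1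
    have hre1 := (Complex.le_def.mp t1).1
    simp only [Complex.zero_re] at hre0 hre1
    rw [Complex.sub_re, Complex.sub_re,
      show ((17:ℂ)/18).re = 17/18 by norm_num [Complex.div_re, Complex.normSq]]
    linarith
end
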